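/- arXiv:1310.3576 — 3 statements merged into one kernel-verified Lean document; each statement's English description precedes it below -/
import Mathlib

section
/- Let θ ∈ (0, π/2), set b = 4θ/π, and define φ(x,y) = Re((x + iy)^b · e^{-iθ}) using the principal complex power. Then for every real x > 0, the gradient of φ at (x,0) equals b·x^{b−1}·(cos θ, sin θ), and for every real y > 0, the gradient of φ at (0,y) equals b·y^{b−1}·(sin θ, cos θ). -/
open Real

/-!
`φ` is the real part of the holomorphic map `F z = z ^ b * e^{-iθ}` read in the coordinates
`z = x + iy`, so by the chain rule `∇φ = (Re F', -Im F')`. On the positive real axis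
`F' = b x^{b-1} e^{-iθ}`. On the positive imaginary axis `(iy)^{b-1} = y^{b-1} e^{i(b-1)π/2}`,
and `b = 4θ/π` turns the phase `(b-1)π/2 - θ` of `F'` into `θ - π/2`.
-/

open Complex

theorem HasDerivAt.fderiv_re_comp_ofReal_add_mul_I {f : ℂ → ℂ} {f' : ℂ} {x y : ℝ}
    (hf : HasDerivAt f f' (x + y * I)) :
    DifferentiableAt ℝ (fun p : ℝ × ℝ => (f (p.1 + p.2 * I)).re) (x, y) ∧
    fderiv ℝ (fun p : ℝ × ℝ => (f (p.1 + p.2 * I)).re) (x, y) (1, 0) = f'.re ∧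
    fderiv ℝ (fun p : ℝ × ℝ => (f (p.1 + p.2 * I)).re) (x, y) (0, 1) = -f'.im := by
  have hL : HasFDerivAt (fun p : ℝ × ℝ => (p.1 : ℂ) + p.2 * I)
      (equivRealProdCLM.symm : ℝ × ℝ →L[ℝ] ℂ) (x, y) := by
    convert (equivRealProdCLM.symm : ℝ × ℝ →L[ℝ] ℂ).hasFDerivAt using 1
    funext p
    simp [equivRealProdCLM_symm_apply]
  have h : HasFDerivAt (fun p : ℝ × ℝ => (f (p.1 + p.2 * I)).re) _ (x, y) :=
    reCLM.hasFDerivAt.comp (x, y) ((hf.hasFDerivAt.restrictScalars ℝ).comp (x, y) hL)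
  refine ⟨h.differentiableAt, ?_, ?_⟩ <;>
    simp [h.fderiv, equivRealProdCLM_symm_apply]

theorem Complex.ofReal_mul_I_cpow {y : ℝ} (hy : 0 < y) (s : ℂ) :
    (y * I) ^ s = (y : ℂ) ^ s * exp (s * (π / 2) * I) := by
  rw [cpow_def_of_ne_zero (by simp [hy.ne']), log_ofReal_mul hy I_ne_zero, log_I,
    cpow_def_of_ne_zero (by simp [hy.ne']), ← exp_add, ofReal_log hy.le]
  ring_nf

theorem stmt_10_general (θ : ℝ) (b : ℝ) (hb : b = 4 * θ / π)
    (φ : ℝ × ℝ → ℝ)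
    (hφ : ∀ p : ℝ × ℝ,
      φ p = ((((p.1 : ℂ) + (p.2 : ℂ) * Complex.I) ^ (b : ℂ))
          * Complex.exp (-(θ : ℂ) * Complex.I)).re) :
    (∀ x : ℝ, 0 < x →
      DifferentiableAt ℝ φ (x, 0) ∧
      fderiv ℝ φ (x, 0) (1, 0) = b * x ^ (b - 1) * Real.cos θ ∧
      fderiv ℝ φ (x, 0) (0, 1) = b * x ^ (b - 1) * Real.sin θ) ∧
    (∀ y : ℝ, 0 < y →
      DifferentiableAt ℝ φ (0, y) ∧
      fderiv ℝ φ (0, y) (1, 0) = b * y ^ (b - 1) * Real.sin θ ∧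
      fderiv ℝ φ (0, y) (0, 1) = b * y ^ (b - 1) * Real.cos θ) := by
  set F : ℂ → ℂ := fun w => w ^ (b : ℂ) * exp (-θ * I)
  obtain rfl : φ = fun p : ℝ × ℝ => (F (p.1 + p.2 * I)).re := funext hφ
  have hF (z : ℂ) (hz : z ∈ slitPlane) : HasDerivAt F (b * z ^ ((b : ℂ) - 1) * exp (-θ * I)) z :=
    (hasStrictDerivAt_cpow_const hz).hasDerivAt.mul_const _
  have hb_sub : ((b - 1 : ℝ) : ℂ) = b - 1 := by push_cast; ring
  constructor
  · intro x hx
    have hd : HasDerivAt F ((b * x ^ (b - 1) : ℝ) * exp ((-θ : ℝ) * I)) (x + (0 : ℝ) * I) := by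
      rw [ofReal_zero, zero_mul, add_zero]
      convert hF x (by simp [hx]) using 1
      rw [← hb_sub, ← ofReal_cpow hx.le]
      push_cast
      ring
    obtain ⟨hdiff, h₁, h₂⟩ := hd.fderiv_re_comp_ofReal_add_mul_I
    refine ⟨hdiff, ?_, ?_⟩
    · rw [h₁, re_ofReal_mul, exp_ofReal_mul_I_re, Real.cos_neg]
    · rw [h₂, im_ofReal_mul, exp_ofReal_mul_I_im, Real.sin_neg, mul_neg, neg_neg]
  · intro y hy
    have hd : HasDerivAt F ((b * y ^ (b - 1) : ℝ) * exp ((θ - π / 2 : ℝ) * I))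
        ((0 : ℝ) + y * I) := by
      rw [ofReal_zero, zero_add]
      convert hF (y * I) (by simp [mem_slitPlane_iff, hy.ne']) using 1
      have hangle : ((θ - π / 2 : ℝ) : ℂ) * I = (b - 1) * (π / 2) * I + -θ * I := by
        rw [hb]
        push_cast
        field_simp
        ring
      rw [ofReal_mul_I_cpow hy, ← hb_sub, ← ofReal_cpow hy.le, hangle, Complex.exp_add]
      push_cast
      ring
    obtain ⟨hdiff, h₁, h₂⟩ := hd.fderiv_re_comp_ofReal_add_mul_I
    refine ⟨hdiff, ?_, ?_⟩
    · rw [h₁, re_ofReal_mul, exp_ofReal_mul_I_re, Real.cos_sub_pi_div_two]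
    · rw [h₂, im_ofReal_mul, exp_ofReal_mul_I_im, Real.sin_sub_pi_div_two, mul_neg, neg_neg]

/-- For `θ ∈ (0, π/2)`, `b = 4θ/π` and `φ(x,y) = Re((x+iy)^b e^{-iθ})` (principal power):
for `x > 0`, `∇φ(x,0) = b x^{b-1} (cos θ, sin θ)`, and for `y > 0`,
`∇φ(0,y) = b y^{b-1} (sin θ, cos θ)`. -/
theorem stmt_10 (θ : ℝ) (hθ : θ ∈ Set.Ioo 0 (π / 2)) (b : ℝ) (hb : b = 4 * θ / π)
    (φ : ℝ × ℝ → ℝ)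
    (hφ : ∀ p : ℝ × ℝ,
      φ p = ((((p.1 : ℂ) + (p.2 : ℂ) * Complex.I) ^ (b : ℂ))
          * Complex.exp (-(θ : ℂ) * Complex.I)).re) :
    (∀ x : ℝ, 0 < x →
      DifferentiableAt ℝ φ (x, 0) ∧
      fderiv ℝ φ (x, 0) (1, 0) = b * x ^ (b - 1) * Real.cos θ ∧
      fderiv ℝ φ (x, 0) (0, 1) = b * x ^ (b - 1) * Real.sin θ) ∧
    (∀ y : ℝ, 0 < y →
      DifferentiableAt ℝ φ (0, y) ∧
      fderiv ℝ φ (0, y) (1, 0) = b * y ^ (b - 1) * Real.sin θ ∧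
      fderiv ℝ φ (0, y) (0, 1) = b * y ^ (b - 1) * Real.cos θ) :=
  stmt_10_general θ b hb φ hφ
end

section
/- Let θ ∈ (0, π/2), b = 4θ/π, φ(x,y) = Re((x + iy)^b · e^{-iθ}) (principal complex power), and let Θ ∈ [θ, π/2). Then for every real x > 0, v₁(Θ)·∇φ(x,0) ≤ 0, and for every real y > 0, v₂(Θ)·∇φ(0,y) ≤ 0, where v₁(Θ) = (−tan Θ, 1), v₂(Θ) = (1, −tan Θ), ∇φ is the gradient of φ, and · the Euclidean inner product on ℝ². -/
/-!
`φ` is the real part of the holomorphic map `f z = z ^ b e^{-iθ}`, so `∇φ = (Re f', -Im f')`.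
Writing the point as `r e^{iα}`, one has `f' = b r^(b-1) e^{i(α(b-1) - θ)}`: on the positive real
axis the phase is `-θ`, on the positive imaginary axis it is `θ - π/2` because `b = 4θ/π`.
In both cases the directional derivative is `b r^(b-1) (sin θ - tan Θ cos θ)`, which is `≤ 0`
since `tan` is monotone on `(-π/2, π/2)` and `θ ≤ Θ`.
-/

open Real

namespace Complex

theorem fderiv_re_comp_apply_of_hasDerivAt {f : ℂ → ℂ} {d : ℂ} {x y : ℝ}
    (hf : HasDerivAt f d (x + y * I)) (u v : ℝ) :
    fderiv ℝ (fun p : ℝ × ℝ => (f (p.1 + p.2 * I)).re) (x, y) (u, v) = d.re * u - d.im * v := by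
  have hL : HasFDerivAt (fun p : ℝ × ℝ => (p.1 + p.2 * I : ℂ))
      (equivRealProdCLM.symm : ℝ × ℝ →L[ℝ] ℂ) (x, y) := by
    rw [show (fun p : ℝ × ℝ => (p.1 + p.2 * I : ℂ)) = equivRealProdCLM.symm from
      funext fun p => (equivRealProdCLM_symm_apply p).symm]
    exact equivRealProdCLM.symm.hasFDerivAt
  have h : HasFDerivAt (fun p : ℝ × ℝ => (f (p.1 + p.2 * I)).re) _ (x, y) :=
    reCLM.hasFDerivAt.comp (x, y) ((hf.hasFDerivAt.restrictScalars ℝ).comp (x, y) hL)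
  rw [h.fderiv]
  simp only [ContinuousLinearMap.comp_apply, reCLM_apply, ContinuousLinearEquiv.coe_coe,
    equivRealProdCLM_symm_apply, ContinuousLinearMap.coe_restrictScalars',
    ContinuousLinearMap.toSpanSingleton_apply, smul_eq_mul, mul_re, add_re, ofReal_re, I_re,
    mul_zero, ofReal_im, I_im, mul_one, sub_self, add_zero, add_im, mul_im, zero_add]
  ring

theorem ofReal_mul_exp_mul_I_cpow {r α : ℝ} (hr : 0 < r) (hα : α ∈ Set.Ioc (-π) π) (s : ℝ) :
    ((r : ℂ) * exp (α * I)) ^ (s : ℂ) = ((r ^ s : ℝ) : ℂ) * exp ((α * s : ℝ) * I) := by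
  rw [cpow_def_of_ne_zero (mul_ne_zero (ofReal_ne_zero.2 hr.ne') (exp_ne_zero _)),
    log_ofReal_mul hr (exp_ne_zero _),
    log_exp (by simpa using hα.1) (by simpa using hα.2), Real.rpow_def_of_pos hr, ofReal_exp,
    ← exp_add]
  push_cast
  ring_nf

theorem hasDerivAt_cpow_const_mul_of_polar {r α : ℝ} (hr : 0 < r) (hα : α ∈ Set.Ioo (-π) π)
    (s : ℝ) (w : ℂ) :
    HasDerivAt (fun z : ℂ => z ^ (s : ℂ) * w)
      (((s * r ^ (s - 1) : ℝ) : ℂ) * exp ((α * (s - 1) : ℝ) * I) * w) (r * exp (α * I)) := by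
  have hslit : (r : ℂ) * exp (α * I) ∈ slitPlane := by
    rw [mem_slitPlane_iff_arg, arg_real_mul _ hr, arg_exp_mul_I, (toIocMod_eq_self _).2]
    · exact ⟨hα.2.ne, mul_ne_zero (ofReal_ne_zero.2 hr.ne') (exp_ne_zero _)⟩
    · constructor <;> linarith [hα.1, hα.2]
  have h := ((hasStrictDerivAt_cpow_const (c := s) hslit).hasDerivAt).mul_const w
  rw [show (s : ℂ) - 1 = ((s - 1 : ℝ) : ℂ) by push_cast; ring,
    ofReal_mul_exp_mul_I_cpow hr (Set.Ioo_subset_Ioc_self hα)] at h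
  refine h.congr_deriv ?_
  push_cast
  ring

theorem fderiv_re_cpow_mul_exp_apply {x y r α : ℝ} (hr : 0 < r) (hα : α ∈ Set.Ioo (-π) π)
    (hxy : (x : ℂ) + y * I = r * exp (α * I)) (s θ u v : ℝ) :
    fderiv ℝ (fun p : ℝ × ℝ => (((p.1 : ℂ) + (p.2 : ℂ) * I) ^ (s : ℂ) * exp (-(θ : ℂ) * I)).re)
        (x, y) (u, v) =
      s * r ^ (s - 1) * (Real.cos (α * (s - 1) - θ) * u - Real.sin (α * (s - 1) - θ) * v) := by
  have hd := hasDerivAt_cpow_const_mul_of_polar hr hα s (exp (-(θ : ℂ) * I))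
  rw [← hxy] at hd
  rw [fderiv_re_comp_apply_of_hasDerivAt hd, mul_assoc, ← exp_add,
    show ((α * (s - 1) : ℝ) : ℂ) * I + -(θ : ℂ) * I = ((α * (s - 1) - θ : ℝ) : ℂ) * I by
      push_cast; ring,
    re_ofReal_mul, im_ofReal_mul, exp_ofReal_mul_I_re, exp_ofReal_mul_I_im]
  ring

end Complex

theorem Real.sin_le_tan_mul_cos {θ Θ : ℝ} (hθ : -(π / 2) < θ) (hθΘ : θ ≤ Θ) (hΘ : Θ < π / 2) :
    sin θ ≤ tan Θ * cos θ := by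
  have hcos : 0 < cos θ := cos_pos_of_mem_Ioo ⟨hθ, hθΘ.trans_lt hΘ⟩
  calc sin θ = tan θ * cos θ := (tan_mul_cos hcos.ne').symm
    _ ≤ tan Θ * cos θ := by
      gcongr
      exact strictMonoOn_tan.monotoneOn ⟨hθ, hθΘ.trans_lt hΘ⟩ ⟨hθ.trans_le hθΘ, hΘ⟩ hθΘ

/-- For `θ ∈ (0, π/2)`, `b = 4θ/π`, `φ(x,y) = Re((x+iy)^b e^{-iθ})` (principal power)
and `Θ ∈ [θ, π/2)`: for all `x > 0`, `v₁(Θ)·∇φ(x,0) ≤ 0`, and for all `y > 0`,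
`v₂(Θ)·∇φ(0,y) ≤ 0`, where `v₁(Θ) = (-tan Θ, 1)` and `v₂(Θ) = (1, -tan Θ)`. -/
theorem stmt_11 (θ : ℝ) (hθ : θ ∈ Set.Ioo 0 (π / 2)) (b : ℝ) (hb : b = 4 * θ / π)
    (φ : ℝ × ℝ → ℝ)
    (hφ : ∀ p : ℝ × ℝ,
      φ p = ((((p.1 : ℂ) + (p.2 : ℂ) * Complex.I) ^ (b : ℂ))
          * Complex.exp (-(θ : ℂ) * Complex.I)).re)
    (Θ : ℝ) (hΘ : Θ ∈ Set.Ico θ (π / 2)) :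
    (∀ x : ℝ, 0 < x →
      (-Real.tan Θ) * fderiv ℝ φ (x, 0) (1, 0) + 1 * fderiv ℝ φ (x, 0) (0, 1) ≤ 0) ∧
    (∀ y : ℝ, 0 < y →
      1 * fderiv ℝ φ (0, y) (1, 0) + (-Real.tan Θ) * fderiv ℝ φ (0, y) (0, 1) ≤ 0) := by
  obtain rfl : φ = _ := funext hφ
  have hb0 : 0 < b := by rw [hb]; exact div_pos (by linarith [hθ.1]) pi_pos
  have hsin := sin_le_tan_mul_cos (by linarith [hθ.1, pi_pos]) hΘ.1 hΘ.2
  constructor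
  · intro x hx
    have hpt : (x : ℂ) + ((0 : ℝ) : ℂ) * Complex.I = x * Complex.exp ((0 : ℝ) * Complex.I) := by
      simp
    have hα : (0 : ℝ) ∈ Set.Ioo (-π) π := ⟨by linarith [pi_pos], pi_pos⟩
    rw [Complex.fderiv_re_cpow_mul_exp_apply hx hα hpt,
      Complex.fderiv_re_cpow_mul_exp_apply hx hα hpt, zero_mul, zero_sub, cos_neg, sin_neg]
    nlinarith [mul_le_mul_of_nonneg_left hsin (by positivity : 0 ≤ b * x ^ (b - 1))]
  · intro y hy
    have hpt : ((0 : ℝ) : ℂ) + y * Complex.I = y * Complex.exp ((π / 2 : ℝ) * Complex.I) := by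
      simp [Complex.exp_pi_div_two_mul_I]
    have hα : π / 2 ∈ Set.Ioo (-π) π := ⟨by linarith [pi_pos], by linarith [pi_pos]⟩
    have hphase : π / 2 * (b - 1) - θ = θ - π / 2 := by rw [hb]; field_simp; ring
    rw [Complex.fderiv_re_cpow_mul_exp_apply hy hα hpt,
      Complex.fderiv_re_cpow_mul_exp_apply hy hα hpt, hphase, cos_sub_pi_div_two,
      sin_sub_pi_div_two]
    nlinarith [mul_le_mul_of_nonneg_left hsin (by positivity : 0 ≤ b * y ^ (b - 1))]
end

section
/- Let 0 < θ̃ < θ < π/2, set b̃ = 4θ̃/π and φ̃(x,y) = Re((x + iy)^{b̃} · e^{-iθ̃}) (principal complex power). Set c = b̃ · cos θ̃ · (tan θ − tan θ̃); then c > 0 and for every Θ ∈ [θ, π/2): for all real x > 0, v₁(Θ)·∇φ̃(x,0) ≤ −c·x^{b̃−1}, and for all real y > 0, v₂(Θ)·∇φ̃(0,y) ≤ −c·y^{b̃−1}, where v₁(Θ) = (−tan Θ, 1), v₂(Θ) = (1, −tan Θ), ∇φ̃ is the gradient of φ̃, and · the Euclidean inner product on ℝ². -/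
open Real

/-! `φ̃` is the real part of the holomorphic function `f z = z ^ b̃ * exp (-i θ̃)`, so
`∇φ̃ = (Re f', -Im f')` with `f' z = b̃ |z| ^ (b̃ - 1) exp (i ((b̃ - 1) arg z - θ̃))`.
On the positive `x`-axis the phase is `-θ̃`; on the positive `y`-axis it is `θ̃ - π/2`, since
`b̃ π / 2 = 2 θ̃`. In both cases the inner product becomes
`b̃ r ^ (b̃ - 1) (sin θ̃ - tan Θ cos θ̃) = b̃ r ^ (b̃ - 1) cos θ̃ (tan θ̃ - tan Θ)`,
and `tan θ ≤ tan Θ` gives the bound. -/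

open Complex in
theorem HasDerivAt.fderiv_re_comp_add_mul_I {f : ℂ → ℂ} {f' : ℂ} {p : ℝ × ℝ}
    (hf : HasDerivAt f f' (p.1 + p.2 * I)) (v : ℝ × ℝ) :
    fderiv ℝ (fun q : ℝ × ℝ => (f (q.1 + q.2 * I)).re) p v = (f' * (v.1 + v.2 * I)).re := by
  have hL : HasFDerivAt (fun q : ℝ × ℝ => (q.1 : ℂ) + q.2 * I)
      (equivRealProdCLM.symm : ℝ × ℝ →L[ℝ] ℂ) p :=
    (equivRealProdCLM.symm : ℝ × ℝ →L[ℝ] ℂ).hasFDerivAt.congr_of_eventuallyEq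
      (Filter.Eventually.of_forall fun q => (equivRealProdCLM_symm_apply q).symm)
  have hφ : HasFDerivAt (fun q : ℝ × ℝ => (f (q.1 + q.2 * I)).re) _ p :=
    reCLM.hasFDerivAt.comp p ((hf.hasFDerivAt.restrictScalars ℝ).comp p hL)
  rw [hφ.fderiv]
  simp [mul_comm]

namespace Complex

theorem cpow_ofReal_mul_exp_neg_mul_I (z : ℂ) (s t : ℝ) :
    z ^ (s : ℂ) * exp (-(t : ℂ) * I) = ↑(‖z‖ ^ s) * exp ((arg z * s - t : ℝ) * I) := by
  rw [cpow_ofReal, ofReal_cos, ofReal_sin, ← exp_mul_I, mul_assoc, ← Complex.exp_add]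
  push_cast
  ring_nf

theorem hasDerivAt_cpow_mul_exp_neg_mul_I {z : ℂ} (hz : z ∈ slitPlane) (b t : ℝ) :
    HasDerivAt (fun w : ℂ => w ^ (b : ℂ) * exp (-(t : ℂ) * I))
      (↑(b * ‖z‖ ^ (b - 1)) * exp ((arg z * (b - 1) - t : ℝ) * I)) z := by
  refine ((hasStrictDerivAt_cpow_const (c := (b : ℂ)) hz).hasDerivAt.mul_const
    (exp (-(t : ℂ) * I))).congr_deriv ?_
  rw [mul_assoc, ← ofReal_one, ← ofReal_sub, cpow_ofReal_mul_exp_neg_mul_I]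
  push_cast
  ring

theorem fderiv_re_cpow_mul_exp_neg_mul_I {p : ℝ × ℝ} (hp : (p.1 + p.2 * I : ℂ) ∈ slitPlane)
    (b t : ℝ) :
    fderiv ℝ (fun q : ℝ × ℝ => ((q.1 + q.2 * I : ℂ) ^ (b : ℂ) * exp (-(t : ℂ) * I)).re) p (1, 0)
        = b * ‖(p.1 + p.2 * I : ℂ)‖ ^ (b - 1) * Real.cos (arg (p.1 + p.2 * I) * (b - 1) - t) ∧
      fderiv ℝ (fun q : ℝ × ℝ => ((q.1 + q.2 * I : ℂ) ^ (b : ℂ) * exp (-(t : ℂ) * I)).re) p (0, 1)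
        = -(b * ‖(p.1 + p.2 * I : ℂ)‖ ^ (b - 1) * Real.sin (arg (p.1 + p.2 * I) * (b - 1) - t)) := by
  have hf := (hasDerivAt_cpow_mul_exp_neg_mul_I hp b t).fderiv_re_comp_add_mul_I
  refine ⟨?_, ?_⟩
  · rw [hf]
    simp only [ofReal_one, ofReal_zero, zero_mul, add_zero, mul_one, re_ofReal_mul,
      exp_ofReal_mul_I_re]
  · rw [hf]
    simp only [ofReal_one, ofReal_zero, one_mul, zero_add, mul_I_re, im_ofReal_mul,
      exp_ofReal_mul_I_im]

end Complex

theorem sin_sub_tan_mul_cos_le {α θ Θ : ℝ} (hα : 0 < cos α) (hθΘ : tan θ ≤ tan Θ) :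
    sin α - tan Θ * cos α ≤ -(cos α * (tan θ - tan α)) := by
  rw [tan_eq_sin_div_cos α]
  field_simp
  nlinarith

/-- For `0 < θ̃ < θ < π/2`, `b̃ = 4θ̃/π`, `φ̃(x,y) = Re((x+iy)^{b̃} e^{-iθ̃})` (principal
power) and `c = b̃ cos θ̃ (tan θ - tan θ̃)`: `c > 0` and for every `Θ ∈ [θ, π/2)`,
for all `x > 0`, `v₁(Θ)·∇φ̃(x,0) ≤ -c x^{b̃-1}`, and for all `y > 0`,
`v₂(Θ)·∇φ̃(0,y) ≤ -c y^{b̃-1}`, with `v₁(Θ) = (-tan Θ, 1)` and `v₂(Θ) = (1, -tan Θ)`. -/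
theorem stmt_12 (θt θ : ℝ) (h₀ : 0 < θt) (h₁ : θt < θ) (h₂ : θ < π / 2)
    (bt : ℝ) (hbt : bt = 4 * θt / π)
    (φ : ℝ × ℝ → ℝ)
    (hφ : ∀ p : ℝ × ℝ,
      φ p = ((((p.1 : ℂ) + (p.2 : ℂ) * Complex.I) ^ (bt : ℂ))
          * Complex.exp (-(θt : ℂ) * Complex.I)).re)
    (c : ℝ) (hc : c = bt * Real.cos θt * (Real.tan θ - Real.tan θt)) :
    0 < c ∧
    ∀ Θ : ℝ, Θ ∈ Set.Ico θ (π / 2) →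
      (∀ x : ℝ, 0 < x →
        (-Real.tan Θ) * fderiv ℝ φ (x, 0) (1, 0) + 1 * fderiv ℝ φ (x, 0) (0, 1)
          ≤ -c * x ^ (bt - 1)) ∧
      (∀ y : ℝ, 0 < y →
        1 * fderiv ℝ φ (0, y) (1, 0) + (-Real.tan Θ) * fderiv ℝ φ (0, y) (0, 1)
          ≤ -c * y ^ (bt - 1)) := by
  have hbt_pos : 0 < bt := by rw [hbt]; positivity
  have hcos : 0 < cos θt := cos_pos_of_mem_Ioo ⟨by linarith, h₁.trans h₂⟩
  obtain rfl : φ = _ := funext hφ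
  subst hc
  refine ⟨mul_pos (mul_pos hbt_pos hcos)
    (sub_pos.2 (tan_lt_tan_of_nonneg_of_lt_pi_div_two h₀.le h₂ h₁)), fun Θ ⟨hθΘ, hΘ⟩ => ?_⟩
  have hbound := sin_sub_tan_mul_cos_le (θ := θ) hcos
    (strictMonoOn_tan.monotoneOn ⟨by linarith, h₂⟩ ⟨by linarith, hΘ⟩ hθΘ)
  refine ⟨fun x hx => ?_, fun y hy => ?_⟩
  · obtain ⟨h10, h01⟩ := Complex.fderiv_re_cpow_mul_exp_neg_mul_I (p := (x, 0))
      (by simpa using hx) bt θt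
    simp only [Complex.ofReal_zero, zero_mul, add_zero, Complex.norm_real, Real.norm_eq_abs,
      abs_of_pos hx, Complex.arg_ofReal_of_nonneg hx.le, zero_sub, cos_neg,
      sin_neg] at h10 h01
    rw [h10, h01]
    linear_combination mul_le_mul_of_nonneg_left hbound (by positivity : 0 ≤ bt * x ^ (bt - 1))
  · have hangle : π / 2 * (bt - 1) - θt = θt - π / 2 := by rw [hbt]; field_simp; ring
    obtain ⟨h10, h01⟩ := Complex.fderiv_re_cpow_mul_exp_neg_mul_I (p := (0, y))
      (Complex.mem_slitPlane_iff.2 (Or.inr (by simpa using hy.ne'))) bt θt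
    simp only [Complex.ofReal_zero, zero_add, norm_mul, Complex.norm_real, Real.norm_eq_abs,
      abs_of_pos hy, Complex.norm_I, mul_one, Complex.arg_real_mul _ hy, Complex.arg_I,
      hangle, cos_sub_pi_div_two, sin_sub_pi_div_two] at h10 h01
    rw [h10, h01]
    linear_combination mul_le_mul_of_nonneg_left hbound (by positivity : 0 ≤ bt * y ^ (bt - 1))
end
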